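/- (Theorem 1, null space learning guarantee) Let A = B + S ∈ ℝ^{N₁×n} with rows a_i, b_i, s_i, let z* be the minimizer of ‖Sz‖₁ over {z : Bz = 0, vᵀz = 1}, let L_S = {i : s_i = 0}, L_{z*} = {i : s_iᵀz* = 0}, α = ∑_i sgn(s_iᵀz*)·a_i, and let R_b, P_b be orthonormal bases of the row space and null space of B. If (1/2)·inf_{δ∈R_b, ‖δ‖=1} ( ∑_{i∈L_S} |b_iᵀδ| − 2∑_{i∈L_S^c ∩ L_{z*}} |b_iᵀδ| ) > ∑_{i∈L_{z*}} ‖s_i‖ + ‖α‖, and (‖vᵀP_b‖/(2‖vᵀR_b‖))·inf_{δ∈R_b, ‖δ‖=1} ∑_{i∈L_S} |b_iᵀδ| > ∑_{i∈L_{z*}} ‖s_i‖ + ‖α‖, then z* is a global minimizer of ‖Az‖₁ over {z : vᵀz = 1}. -/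

import Mathlib

/-!
Split `z = x + y` with `x` in the row space `R` of `B` and `y` in the null space `Rᗮ`.
Along a ray from `z*` the objective `‖Sz‖₁` is exactly affine for small steps, so optimality of
`z*` on `{z ∈ Rᗮ | vᵀz = 1}` gives the first-order condition
`|⟪α, u⟫| ≤ ∑_{i ∈ L_{z*}} |⟪sᵢ, u⟫|` for every `u ∈ Rᗮ` with `vᵀu = 0`.
Bounding `|⟪aᵢ, z⟫|` from below by `sgn(⟪sᵢ, z*⟫)⟪aᵢ, z⟫` off `L_{z*}`, by `|⟪bᵢ, x⟫|` on `L_S`, and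
by the triangle inequality on `L_S^c ∩ L_{z*}`, this condition yields
`‖Az‖₁ ≥ ⟪v, y⟫‖Az*‖₁ - (∑_{L_{z*}} ‖sᵢ‖ + ‖α‖)‖x‖`
`        + ∑_{L_S} |⟪bᵢ, x⟫| - ∑_{L_S^c ∩ L_{z*}} |⟪bᵢ, x⟫|`.
As `⟪v, y⟫ = 1 - ⟪v, x⟫ ≥ 1 - ‖P_R v‖‖x‖`, it suffices that the `ℓ₁` terms in `x` dominate
`(‖Az*‖₁‖P_R v‖ + ∑_{L_{z*}} ‖sᵢ‖ + ‖α‖)‖x‖`; by homogeneity this is a statement about unit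
vectors of `R`. The first hypothesis absorbs `∑ ‖sᵢ‖ + ‖α‖`, and the second absorbs
`‖Az*‖₁‖P_R v‖` once the first-order condition in the direction `‖P_{Rᗮ} v‖² z* - P_{Rᗮ} v` has given
`‖Az*‖₁‖P_{Rᗮ} v‖ ≤ ∑_{L_{z*}} ‖sᵢ‖ + ‖α‖`.
-/

open scoped Classical RealInnerProductSpace
open Filter Topology Finset

lemma Real.sign_mul_self_eq_abs (r : ℝ) : Real.sign r * r = |r| := by
  rcases lt_trichotomy r 0 with hr | rfl | hr
  · rw [Real.sign_of_neg hr, abs_of_neg hr, neg_one_mul]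
  · simp
  · rw [Real.sign_of_pos hr, abs_of_pos hr, one_mul]

-- `Real.sign p * q + if p = 0 then |q| else 0` is the right derivative of `t ↦ |p + t * q|` at `0`.
lemma abs_add_mul_eventually_eq (p q : ℝ) :
    ∀ᶠ t in 𝓝[>] (0 : ℝ),
      |p + t * q| = |p| + t * (Real.sign p * q + if p = 0 then |q| else 0) := by
  have hlim : Tendsto (fun t => p + t * q) (𝓝[>] 0) (𝓝 p) := by
    have : Continuous fun t : ℝ => p + t * q := by fun_prop
    simpa using (this.tendsto 0).mono_left nhdsWithin_le_nhds
  rcases lt_trichotomy p 0 with hp | rfl | hp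
  · filter_upwards [hlim.eventually (gt_mem_nhds hp)] with t ht
    rw [abs_of_neg ht, abs_of_neg hp, Real.sign_of_neg hp, if_neg hp.ne]
    ring
  · filter_upwards [self_mem_nhdsWithin] with t (ht : 0 < t)
    simp [abs_mul, abs_of_pos ht]
  · filter_upwards [hlim.eventually (lt_mem_nhds hp)] with t ht
    rw [abs_of_pos ht, abs_of_pos hp, Real.sign_of_pos hp, if_neg hp.ne']
    ring

section

variable {ι : Type*} [Fintype ι]

lemma sum_sign_mul_add_sum_abs_nonneg (p q : ι → ℝ)
    (h : ∀ t > 0, ∑ i, |p i| ≤ ∑ i, |p i + t * q i|) :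
    0 ≤ ∑ i, Real.sign (p i) * q i + ∑ i with p i = 0, |q i| := by
  obtain ⟨t, hexp, ht⟩ := ((eventually_all.2 fun i => abs_add_mul_eventually_eq (p i) (q i)).and
    self_mem_nhdsWithin).exists
  have hsum : ∑ i, |p i + t * q i| =
      ∑ i, |p i| + t * (∑ i, Real.sign (p i) * q i + ∑ i with p i = 0, |q i|) := by
    rw [sum_congr rfl fun i _ => hexp i, sum_add_distrib, ← mul_sum, sum_add_distrib, sum_filter]
  have := h t ht
  exact nonneg_of_mul_nonneg_right (by linarith) ht

lemma sum_sign_mul_add_sum_abs_le_sum_abs (p c : ι → ℝ) :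
    ∑ i, Real.sign (p i) * c i + ∑ i with p i = 0, |c i| ≤ ∑ i, |c i| := by
  rw [sum_filter, ← sum_add_distrib]
  refine sum_le_sum fun i _ => ?_
  split_ifs with hp
  · simp [hp]
  · rcases Real.sign_apply_eq_of_ne_zero (p i) hp with h | h <;> rw [h]
    · simpa using neg_le_abs (c i)
    · simpa using le_abs_self (c i)

end

section

variable {ι E : Type*} [NormedAddCommGroup E] [InnerProductSpace ℝ E]

lemma mem_orthogonal_span_range_iff {b : ι → E} {u : E} :
    u ∈ (Submodule.span ℝ (Set.range b))ᗮ ↔ ∀ i, ⟪b i, u⟫ = 0 := by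
  simp_rw [Submodule.mem_orthogonal, ← Submodule.mem_orthogonal_singleton_iff_inner_left (𝕜 := ℝ)]
  exact Submodule.span_le.trans Set.range_subset_iff

lemma csInf_le_of_norm_eq_one {R : Submodule ℝ E} {g : E → ℝ} {m : ℝ}
    (hm : ∀ δ ∈ R, ‖δ‖ = 1 → m ≤ g δ) {δ : E} (hδ : δ ∈ R) (hδ1 : ‖δ‖ = 1) :
    sInf {x | ∃ δ, δ ∈ R ∧ ‖δ‖ = 1 ∧ x = g δ} ≤ g δ :=
  csInf_le ⟨m, by rintro _ ⟨δ, hδ, hδ1, rfl⟩; exact hm δ hδ hδ1⟩ ⟨δ, hδ, hδ1, rfl⟩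

lemma mul_norm_le_of_forall_norm_eq_one {R : Submodule ℝ E} {g : E → ℝ} {K : ℝ}
    (hg : ∀ c : ℝ, 0 ≤ c → ∀ x, g (c • x) = c * g x) (h : ∀ δ ∈ R, ‖δ‖ = 1 → K ≤ g δ)
    {x : E} (hx : x ∈ R) : K * ‖x‖ ≤ g x := by
  rcases eq_or_ne x 0 with rfl | hx0
  · have h0 : g 0 = 0 := by simpa using hg 0 le_rfl 0
    simp [h0]
  have hn : 0 < ‖x‖ := norm_pos_iff.2 hx0
  have hunit : ‖‖x‖⁻¹ • x‖ = 1 := by rw [norm_smul, norm_inv, norm_norm, inv_mul_cancel₀ hn.ne']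
  calc K * ‖x‖ ≤ g (‖x‖⁻¹ • x) * ‖x‖ :=
        mul_le_mul_of_nonneg_right (h _ (R.smul_mem _ hx) hunit) hn.le
    _ = g x := by rw [hg _ (inv_nonneg.2 hn.le)]; field_simp

lemma mul_add_le_sum_abs_inner_sub_of_lt_sInf {R : Submodule ℝ E} {b : ι → E}
    {LS L : Finset ι} {F C nR nN : ℝ} (hF : F * nN ≤ C) (hnR : 0 ≤ nR) (hnN : 0 ≤ nN)
    (h1 : C < 1 / 2 * sInf {x | ∃ δ, δ ∈ R ∧ ‖δ‖ = 1 ∧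
      x = ∑ i ∈ LS, |⟪b i, δ⟫| - 2 * ∑ i ∈ L, |⟪b i, δ⟫|})
    (h2 : C < nN / (2 * nR) * sInf {x | ∃ δ, δ ∈ R ∧ ‖δ‖ = 1 ∧ x = ∑ i ∈ LS, |⟪b i, δ⟫|})
    {δ : E} (hδ : δ ∈ R) (hδ1 : ‖δ‖ = 1) :
    F * nR + C ≤ ∑ i ∈ LS, |⟪b i, δ⟫| - ∑ i ∈ L, |⟪b i, δ⟫| := by
  have hB₁ : ∀ δ : E, 0 ≤ ∑ i ∈ LS, |⟪b i, δ⟫| := fun δ => sum_nonneg fun i _ => abs_nonneg _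
  have hB₂ : ∀ δ : E, ‖δ‖ = 1 → ∑ i ∈ L, |⟪b i, δ⟫| ≤ ∑ i ∈ L, ‖b i‖ := fun δ hδ1 =>
    sum_le_sum fun i _ => by simpa [hδ1] using abs_real_inner_le_norm (b i) δ
  have h1' : C < 1 / 2 * (∑ i ∈ LS, |⟪b i, δ⟫| - 2 * ∑ i ∈ L, |⟪b i, δ⟫|) :=
    h1.trans_le <| mul_le_mul_of_nonneg_left (csInf_le_of_norm_eq_one
      (m := -(2 * ∑ i ∈ L, ‖b i‖)) (fun δ _ hδ1 => by linarith [hB₁ δ, hB₂ δ hδ1]) hδ hδ1)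
      (by norm_num)
  have h2' : C < nN / (2 * nR) * ∑ i ∈ LS, |⟪b i, δ⟫| :=
    h2.trans_le <| mul_le_mul_of_nonneg_left
      (csInf_le_of_norm_eq_one (m := 0) (fun δ _ _ => hB₁ δ) hδ hδ1) (by positivity)
  suffices F * nR ≤ (∑ i ∈ LS, |⟪b i, δ⟫|) / 2 by linarith
  rcases hnR.eq_or_lt with rfl | hnR
  · linarith [hB₁ δ]
  rw [div_mul_eq_mul_div, lt_div_iff₀ (by positivity)] at h2'
  nlinarith [mul_le_mul_of_nonneg_right hF (by positivity : (0 : ℝ) ≤ 2 * nR)]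

lemma le_abs_inner_add_add {b s x y : E} (hby : ⟪b, y⟫ = 0) :
    |⟪s, y⟫| - ‖s‖ * ‖x‖ + (if s = 0 then |⟪b, x⟫| else -|⟪b, x⟫|) ≤ |⟪b + s, x + y⟫| := by
  split_ifs with hs
  · simp [hs, hby, inner_add_right]
  rw [inner_add_left, inner_add_right, inner_add_right, hby, add_zero]
  have h₁ := abs_add_three (⟪b, x⟫ + (⟪s, x⟫ + ⟪s, y⟫)) (-⟪b, x⟫) (-⟪s, x⟫)
  have h₂ := abs_real_inner_le_norm s x
  rw [abs_neg, abs_neg] at h₁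
  ring_nf at h₁ ⊢
  linarith

variable [Fintype ι]

lemma sum_sign_mul_inner_add_sum_abs_nonneg {N : Submodule ℝ E} {s : ι → E} {v zs : E}
    (hzs : zs ∈ N) (hvzs : ⟪v, zs⟫ = 1)
    (hopt : ∀ z ∈ N, ⟪v, z⟫ = 1 → ∑ i, |⟪s i, zs⟫| ≤ ∑ i, |⟪s i, z⟫|)
    {u : E} (hu : u ∈ N) (hvu : ⟪v, u⟫ = 0) :
    0 ≤ ∑ i, Real.sign ⟪s i, zs⟫ * ⟪s i, u⟫ + ∑ i with ⟪s i, zs⟫ = 0, |⟪s i, u⟫| :=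
  sum_sign_mul_add_sum_abs_nonneg _ _ fun t _ => by
    simpa only [inner_add_right, inner_smul_right] using
      hopt (zs + t • u) (N.add_mem hzs (N.smul_mem t hu))
        (by rw [inner_add_right, inner_smul_right, hvzs, hvu, mul_zero, add_zero])

lemma abs_sum_sign_mul_inner_le {N : Submodule ℝ E} {s : ι → E} {v zs : E}
    (hzs : zs ∈ N) (hvzs : ⟪v, zs⟫ = 1)
    (hopt : ∀ z ∈ N, ⟪v, z⟫ = 1 → ∑ i, |⟪s i, zs⟫| ≤ ∑ i, |⟪s i, z⟫|)
    {u : E} (hu : u ∈ N) (hvu : ⟪v, u⟫ = 0) :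
    |∑ i, Real.sign ⟪s i, zs⟫ * ⟪s i, u⟫| ≤ ∑ i with ⟪s i, zs⟫ = 0, |⟪s i, u⟫| := by
  have h₁ := sum_sign_mul_inner_add_sum_abs_nonneg hzs hvzs hopt hu hvu
  have h₂ := sum_sign_mul_inner_add_sum_abs_nonneg hzs hvzs hopt (N.neg_mem hu)
    (by rw [inner_neg_right, hvu, neg_zero])
  simp only [inner_neg_right, abs_neg, mul_neg, sum_neg_distrib] at h₂
  exact abs_le.2 ⟨by linarith, by linarith⟩

lemma inner_sum_smul_add_eq {b s : ι → E} (c : ι → ℝ) {u : E} (hbu : ∀ i, ⟪b i, u⟫ = 0) :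
    ⟪∑ i, c i • (b i + s i), u⟫ = ∑ i, c i * ⟪s i, u⟫ := by
  simp only [sum_inner, inner_smul_left, inner_add_left, hbu, zero_add, RCLike.conj_to_real]

lemma sum_abs_inner_mul_norm_le {R : Submodule ℝ E} [R.HasOrthogonalProjection]
    {a b s : ι → E} {v zs : E} (hA : ∀ i, a i = b i + s i) (hbR : ∀ i, b i ∈ R)
    (hzs : zs ∈ Rᗮ) (hvzs : ⟪v, zs⟫ = 1)
    (hopt : ∀ z ∈ Rᗮ, ⟪v, z⟫ = 1 → ∑ i, |⟪s i, zs⟫| ≤ ∑ i, |⟪s i, z⟫|) :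
    (∑ i, |⟪s i, zs⟫|) * ‖Rᗮ.starProjection v‖ ≤
      ∑ i with ⟪s i, zs⟫ = 0, ‖s i‖ + ‖∑ i, Real.sign ⟪s i, zs⟫ • a i‖ := by
  set w := Rᗮ.starProjection v
  set α := ∑ i, Real.sign ⟪s i, zs⟫ • a i
  have hw : w ∈ Rᗮ := Rᗮ.starProjection_apply_mem v
  have hvw : ⟪v, w⟫ = ‖w‖ ^ 2 := by
    rw [← real_inner_self_eq_norm_sq]
    conv_rhs => rw [Submodule.inner_starProjection_left_eq_right,
      Submodule.starProjection_eq_self_iff.2 hw]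
  -- `w` is the null-space part of `v`, so `‖w‖² zs - w` is a feasible direction
  set d := ‖w‖ ^ 2 • zs - w
  have hvd : ⟪v, d⟫ = 0 := by rw [inner_sub_right, inner_smul_right, hvzs, hvw, mul_one, sub_self]
  have hopt_d := abs_sum_sign_mul_inner_le hzs hvzs hopt (Rᗮ.sub_mem (Rᗮ.smul_mem _ hzs) hw) hvd
  have hαw : ⟪α, w⟫ = ∑ i, Real.sign ⟪s i, zs⟫ * ⟪s i, w⟫ := by
    simp only [α, hA]
    exact inner_sum_smul_add_eq _ fun i => Submodule.inner_right_of_mem_orthogonal (hbR i) hw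
  have hsd : ∑ i, Real.sign ⟪s i, zs⟫ * ⟪s i, d⟫ = ‖w‖ ^ 2 * ∑ i, |⟪s i, zs⟫| - ⟪α, w⟫ := by
    simp only [d, hαw, inner_sub_right, inner_smul_right, mul_sub, sum_sub_distrib, mul_sum]
    congr 1
    refine sum_congr rfl fun i _ => ?_
    rw [← Real.sign_mul_self_eq_abs]
    ring
  have hLz : ∑ i with ⟪s i, zs⟫ = 0, |⟪s i, d⟫| ≤ (∑ i with ⟪s i, zs⟫ = 0, ‖s i‖) * ‖w‖ := by
    rw [sum_mul]
    refine sum_le_sum fun i hi => ?_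
    have hsdi : ⟪s i, d⟫ = -⟪s i, w⟫ := by
      simp [d, inner_sub_right, inner_smul_right, (mem_filter.1 hi).2]
    rw [hsdi, abs_neg]
    exact abs_real_inner_le_norm _ _
  have hαw_le := real_inner_le_norm α w
  have hmul : ‖w‖ * ((∑ i, |⟪s i, zs⟫|) * ‖w‖) ≤
      ‖w‖ * (∑ i with ⟪s i, zs⟫ = 0, ‖s i‖ + ‖α‖) := by
    linarith [le_abs_self (∑ i, Real.sign ⟪s i, zs⟫ * ⟪s i, d⟫)]
  rcases (norm_nonneg w).eq_or_lt with hw0 | hw0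
  · rw [← hw0, mul_zero]
    positivity
  · exact le_of_mul_le_mul_left hmul hw0

lemma sum_abs_inner_add_ge_of_subset [DecidableEq ι] {b s : ι → E} {LS L : Finset ι}
    (hLS : ∀ i, i ∈ LS ↔ s i = 0) (hL : LS ⊆ L) (x : E) {y : E} (hby : ∀ i, ⟪b i, y⟫ = 0) :
    ∑ i ∈ L, |⟪s i, y⟫| - (∑ i ∈ L, ‖s i‖) * ‖x‖ +
        (∑ i ∈ LS, |⟪b i, x⟫| - ∑ i ∈ LSᶜ ∩ L, |⟪b i, x⟫|) ≤
      ∑ i ∈ L, |⟪b i + s i, x + y⟫| := by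
  have hsplit : ∑ i ∈ L, (if s i = 0 then |⟪b i, x⟫| else -|⟪b i, x⟫|) =
      ∑ i ∈ LS, |⟪b i, x⟫| - ∑ i ∈ LSᶜ ∩ L, |⟪b i, x⟫| := by
    rw [sum_ite, sum_neg_distrib, ← sub_eq_add_neg]
    congr 2 <;> ext i <;> simp only [mem_filter, mem_inter, mem_compl, hLS]
    · exact ⟨And.right, fun hi => ⟨hL ((hLS i).2 hi), hi⟩⟩
    · exact and_comm
  calc _ = ∑ i ∈ L, (|⟪s i, y⟫| - ‖s i‖ * ‖x‖ +
          (if s i = 0 then |⟪b i, x⟫| else -|⟪b i, x⟫|)) := by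
        rw [sum_add_distrib, sum_sub_distrib, sum_mul, hsplit]
    _ ≤ _ := sum_le_sum fun i _ => le_abs_inner_add_add (hby i)

lemma sum_abs_inner_add_ge [DecidableEq ι] {R : Submodule ℝ E} {a b s : ι → E} {v zs : E}
    {LS : Finset ι} (hA : ∀ i, a i = b i + s i) (hLS : ∀ i, i ∈ LS ↔ s i = 0)
    (hbR : ∀ i, b i ∈ R) (hzs : zs ∈ Rᗮ) (hvzs : ⟪v, zs⟫ = 1)
    (hopt : ∀ z ∈ Rᗮ, ⟪v, z⟫ = 1 → ∑ i, |⟪s i, zs⟫| ≤ ∑ i, |⟪s i, z⟫|) (x : E) {y : E}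
    (hy : y ∈ Rᗮ) :
    ⟪v, y⟫ * ∑ i, |⟪s i, zs⟫| -
        (∑ i with ⟪s i, zs⟫ = 0, ‖s i‖ + ‖∑ i, Real.sign ⟪s i, zs⟫ • a i‖) * ‖x‖ +
        (∑ i ∈ LS, |⟪b i, x⟫| - ∑ i ∈ LSᶜ ∩ univ.filter fun i => ⟪s i, zs⟫ = 0, |⟪b i, x⟫|) ≤
      ∑ i, |⟪a i, x + y⟫| := by
  set α := ∑ i, Real.sign ⟪s i, zs⟫ • a i
  have hb : ∀ w ∈ Rᗮ, ∀ i, ⟪b i, w⟫ = 0 := fun w hw i =>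
    Submodule.inner_right_of_mem_orthogonal (hbR i) hw
  set u := y - ⟪v, y⟫ • zs
  have hu : u ∈ Rᗮ := Rᗮ.sub_mem hy (Rᗮ.smul_mem _ hzs)
  have hvu : ⟪v, u⟫ = 0 := by rw [inner_sub_right, inner_smul_right, hvzs, mul_one, sub_self]
  have hαxy : ⟪α, x + y⟫ = ⟪α, x⟫ + ∑ i, Real.sign ⟪s i, zs⟫ * ⟪s i, u⟫ +
      ⟪v, y⟫ * ∑ i, |⟪s i, zs⟫| := by
    rw [show x + y = x + u + ⟪v, y⟫ • zs by simp only [u, add_assoc, sub_add_cancel],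
      inner_add_right, inner_add_right, inner_smul_right]
    simp only [α, hA, inner_sum_smul_add_eq _ (hb u hu), inner_sum_smul_add_eq _ (hb zs hzs),
      Real.sign_mul_self_eq_abs]
  have hopt_u := abs_le.1 (abs_sum_sign_mul_inner_le hzs hvzs hopt hu hvu)
  have huy : ∑ i with ⟪s i, zs⟫ = 0, |⟪s i, u⟫| = ∑ i with ⟪s i, zs⟫ = 0, |⟪s i, y⟫| :=
    sum_congr rfl fun i hi => by
      simp [u, inner_sub_right, inner_smul_right, (mem_filter.1 hi).2]
  have hsign := sum_sign_mul_add_sum_abs_le_sum_abs (fun i => ⟪s i, zs⟫) (fun i => ⟪a i, x + y⟫)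
  have hαsum : ∑ i, Real.sign ⟪s i, zs⟫ * ⟪a i, x + y⟫ = ⟪α, x + y⟫ := by
    simp only [α, sum_inner, inner_smul_left, RCLike.conj_to_real]
  have hLz := sum_abs_inner_add_ge_of_subset (L := univ.filter fun i => ⟪s i, zs⟫ = 0) hLS
    (fun i hi => by simp [(hLS i).1 hi]) x (hb y hy)
  simp only [← hA] at hLz
  have hαx := neg_le_of_abs_le (abs_real_inner_le_norm α x)
  linarith

end

/-- Theorem 1 (null space learning guarantee). `A = B + S` with rows `aᵢ = bᵢ + sᵢ`,
`z*` minimizes `‖Sz‖₁` over `{z : Bz = 0, vᵀz = 1}`, `L_S = {i : sᵢ = 0}`,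
`L_{z*} = {i : sᵢᵀz* = 0}`, `α = ∑ᵢ sgn(sᵢᵀz*) aᵢ`, `R` the row space of `B`.
Under the two stated inequalities, `z*` is a global minimizer of `‖Az‖₁`
over `{z : vᵀz = 1}`. -/
theorem stmt_12 {N₁ n : ℕ}
    (a b s : Fin N₁ → EuclideanSpace ℝ (Fin n))
    (hA : ∀ i, a i = b i + s i)
    (v : EuclideanSpace ℝ (Fin n))
    (R : Submodule ℝ (EuclideanSpace ℝ (Fin n)))
    (hR : R = Submodule.span ℝ (Set.range b))
    (zs : EuclideanSpace ℝ (Fin n))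
    (hfeas : (∀ i, (inner ℝ (b i) zs : ℝ) = 0) ∧ (inner ℝ v zs : ℝ) = 1)
    (hopt : ∀ z, (∀ i, (inner ℝ (b i) z : ℝ) = 0) → (inner ℝ v z : ℝ) = 1 →
      ∑ i, |(inner ℝ (s i) zs : ℝ)| ≤ ∑ i, |(inner ℝ (s i) z : ℝ)|)
    (α : EuclideanSpace ℝ (Fin n))
    (hα : α = ∑ i, Real.sign (inner ℝ (s i) zs : ℝ) • a i)
    (LS : Finset (Fin N₁)) (hLS : LS = Finset.univ.filter fun i => s i = 0)
    (Lz : Finset (Fin N₁)) (hLz : Lz = Finset.univ.filter fun i => (inner ℝ (s i) zs : ℝ) = 0)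
    (h1 : ∑ i ∈ Lz, ‖s i‖ + ‖α‖ <
      (1 / 2) * sInf {x : ℝ | ∃ δ, δ ∈ R ∧ ‖δ‖ = 1 ∧
        x = ∑ i ∈ LS, |(inner ℝ (b i) δ : ℝ)|
          - 2 * ∑ i ∈ LSᶜ ∩ Lz, |(inner ℝ (b i) δ : ℝ)|})
    (h2 : ∑ i ∈ Lz, ‖s i‖ + ‖α‖ <
      (‖(Submodule.orthogonalProjection Rᗮ v : EuclideanSpace ℝ (Fin n))‖ /
        (2 * ‖(Submodule.orthogonalProjection R v : EuclideanSpace ℝ (Fin n))‖)) *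
      sInf {x : ℝ | ∃ δ, δ ∈ R ∧ ‖δ‖ = 1 ∧ x = ∑ i ∈ LS, |(inner ℝ (b i) δ : ℝ)|}) :
    ∀ z : EuclideanSpace ℝ (Fin n), (inner ℝ v z : ℝ) = 1 →
      ∑ i, |(inner ℝ (a i) zs : ℝ)| ≤ ∑ i, |(inner ℝ (a i) z : ℝ)| := by
  intro z hz
  subst hα hLz
  have hLS' : ∀ i, i ∈ LS ↔ s i = 0 := fun i => by simp [hLS]
  simp only [← Submodule.starProjection_apply] at h2
  have hbR : ∀ i, b i ∈ R := fun i => hR ▸ Submodule.subset_span (Set.mem_range_self i)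
  have hmem : ∀ w, w ∈ Rᗮ ↔ ∀ i, ⟪b i, w⟫ = 0 := fun w => hR ▸ mem_orthogonal_span_range_iff
  have hzs : zs ∈ Rᗮ := (hmem zs).2 hfeas.1
  have hopt' : ∀ w ∈ Rᗮ, ⟪v, w⟫ = 1 → ∑ i, |⟪s i, zs⟫| ≤ ∑ i, |⟪s i, w⟫| :=
    fun w hw => hopt w ((hmem w).1 hw)
  have hF := sum_abs_inner_mul_norm_le hA hbR hzs hfeas.2 hopt'
  have hunit := fun δ (hδ : δ ∈ R) hδ1 => mul_add_le_sum_abs_inner_sub_of_lt_sInf hF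
    (norm_nonneg _) (norm_nonneg _) h1 h2 hδ hδ1
  obtain ⟨x, hx, y, hy, rfl⟩ : ∃ x ∈ R, ∃ y ∈ Rᗮ, z = x + y :=
    ⟨_, R.starProjection_apply_mem z, _, R.sub_starProjection_mem_orthogonal z,
      (add_sub_cancel _ _).symm⟩
  have hlow := sum_abs_inner_add_ge hA hLS' hbR hzs hfeas.2 hopt' x hy
  have hhom := mul_norm_le_of_forall_norm_eq_one (fun c hc w => by
    simp only [inner_smul_right, abs_mul, abs_of_nonneg hc, ← mul_sum, mul_sub]) hunit hx
  have hvx : ⟪v, x⟫ ≤ ‖R.starProjection v‖ * ‖x‖ := calc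
    ⟪v, x⟫ = ⟪R.starProjection v, x⟫ := by
      rw [R.inner_starProjection_left_eq_right, Submodule.starProjection_eq_self_iff.2 hx]
    _ ≤ _ := real_inner_le_norm _ _
  have hLHS : ∑ i, |⟪a i, zs⟫| = ∑ i, |⟪s i, zs⟫| := by
    simp only [hA, inner_add_left, hfeas.1, zero_add]
  rw [show ⟪v, y⟫ = 1 - ⟪v, x⟫ by rw [inner_add_right] at hz; linarith] at hlow
  have hF0 : 0 ≤ ∑ i, |⟪s i, zs⟫| := sum_nonneg fun i _ => abs_nonneg _
  rw [hLHS]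
  linarith [mul_le_mul_of_nonneg_right hvx hF0]
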